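/- arXiv:1606.00762 — 4 statements merged into one kernel-verified Lean document; each statement's English description precedes it below -/
import Mathlib

section
/- Let H be a graph with no matching of n/2 edges, let A be the set of vertices of H of degree at least n, and let M be a maximal matching in H \ A. Then |A| ≤ n/2 − v(M)/2, where v(M) is the number of vertices covered by M. -/
/-!
If `|A| + e(M) ≥ n / 2`, where `e(M)` is the number of edges of `M`, then `H` has a matching
of `n / 2` edges: either `M` itself has that many edges and one drops some, or one matches
`n / 2 - e(M)` vertices of `A` one at a time to fresh neighbours. At each step fewer than `n`
vertices are blocked (those of the current matching and of the chosen part of `A`), while every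
vertex of `A` has at least `n` neighbours. Hence `|A| + v(M) / 2 < n / 2`, as `v(M) = 2 e(M)`.
-/

open SimpleGraph

/-- `H` contains a matching of `m` edges. -/
def HasMatching {V : Type*} (H : SimpleGraph V) (m : ℕ) : Prop :=
  ∃ M : H.Subgraph, M.IsMatching ∧ M.edgeSet.ncard = m

open Finset

namespace SimpleGraph.Subgraph

variable {V : Type*} {G : SimpleGraph V} {M : G.Subgraph}

lemma ncard_edgeSet_sup_subgraphOfAdj [Finite V] {a b : V} (hab : G.Adj a b)
    (ha : a ∉ M.verts) : (M ⊔ G.subgraphOfAdj hab).edgeSet.ncard = M.edgeSet.ncard + 1 := by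
  have hab' : s(a, b) ∉ M.edgeSet := fun h ↦ ha (M.edge_vert h)
  rw [edgeSet_sup, edgeSet_subgraphOfAdj, Set.union_singleton, Set.ncard_insert_of_notMem hab']

namespace IsMatching

lemma ncard_verts [Finite V] (hM : M.IsMatching) : M.verts.ncard = 2 * M.edgeSet.ncard := by
  classical
  have : Fintype V := Fintype.ofFinite V
  rw [isMatching_iff_forall_degree] at hM
  have hdeg : ∀ v : M.verts, M.coe.degree v = 1 := fun v ↦ by
    rw [coe_degree]; convert hM v v.2
  calc M.verts.ncard = ∑ v : M.verts, M.coe.degree v := by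
        simp [hdeg, Set.ncard_eq_toFinset_card']
    _ = 2 * #M.coe.edgeFinset := by convert M.coe.sum_degrees_eq_twice_card_edges
    _ = 2 * M.coe.edgeSet.ncard := by rw [← coe_edgeFinset, Set.ncard_coe_finset]
    _ = 2 * M.edgeSet.ncard := by
      rw [← M.image_coe_edgeSet_coe,
        Set.ncard_image_of_injective _ (Sym2.map.injective Subtype.val_injective)]

lemma deleteVerts_pair (hM : M.IsMatching) {x y : V} (hxy : M.Adj x y) :
    (M.deleteVerts {x, y}).IsMatching := by
  rintro v ⟨hv, hvxy⟩
  obtain ⟨w, hvw, hw⟩ := hM hv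
  refine ⟨w, ?_, fun u hu ↦ hw u (deleteVerts_adj.mp hu).2.2.2.2⟩
  simp only [Set.mem_insert_iff, Set.mem_singleton_iff, not_or] at hvxy
  have hwx : w ≠ x := by rintro rfl; exact hvxy.2 (hM.eq_of_adj_left hvw.symm hxy)
  have hwy : w ≠ y := by rintro rfl; exact hvxy.1 (hM.eq_of_adj_right hvw hxy)
  simp [hv, hvw, hvw.snd_mem, hvxy, hwx, hwy]

lemma edgeSet_eq_insert_deleteVerts_pair (hM : M.IsMatching) {x y : V} (hxy : M.Adj x y) :
    M.edgeSet = insert s(x, y) (M.deleteVerts {x, y}).edgeSet := by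
  ext e
  induction e using Sym2.ind with
  | _ u v =>
    simp only [Set.mem_insert_iff, Subgraph.mem_edgeSet, deleteVerts_adj, Sym2.eq_iff]
    constructor
    · intro huv
      grind [hM.eq_of_adj_left, hM.eq_of_adj_right, Subgraph.Adj.symm, Subgraph.Adj.fst_mem,
        Subgraph.Adj.snd_mem]
    · rintro ((⟨rfl, rfl⟩ | ⟨rfl, rfl⟩) | h)
      · exact hxy
      · exact hxy.symm
      · exact h.2.2.2.2

lemma sup_subgraphOfAdj (hM : M.IsMatching) {a b : V} (hab : G.Adj a b) (ha : a ∉ M.verts)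
    (hb : b ∉ M.verts) : (M ⊔ G.subgraphOfAdj hab).IsMatching := by
  refine hM.sup (.subgraphOfAdj hab) (Set.disjoint_left.mpr fun v hvM hvab ↦ ?_)
  rw [hM.support_eq_verts] at hvM
  rw [(IsMatching.subgraphOfAdj hab).support_eq_verts, subgraphOfAdj_verts] at hvab
  rcases hvab with rfl | rfl
  exacts [ha hvM, hb hvM]

lemma exists_ncard_edgeSet_eq_add_card [Finite V] (hM : M.IsMatching) (B : Finset V)
    (hBM : Disjoint (B : Set V) M.verts)
    (hdeg : ∀ v ∈ B, 2 * (M.edgeSet.ncard + #B) ≤ (G.neighborSet v).ncard) :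
    ∃ M' : G.Subgraph, M'.IsMatching ∧ M'.edgeSet.ncard = M.edgeSet.ncard + #B := by
  classical
  induction B using Finset.induction_on generalizing M with
  | empty => exact ⟨M, hM, rfl⟩
  | insert a B haB ih =>
    rw [card_insert_of_notMem haB] at hdeg
    rw [coe_insert, Set.disjoint_insert_left] at hBM
    obtain ⟨b, hab, hb⟩ : ∃ b ∈ G.neighborSet a, b ∉ M.verts ∪ insert a ↑B := by
      refine Set.exists_mem_notMem_of_ncard_lt_ncard ?_
      calc (M.verts ∪ insert a ↑B).ncard ≤ M.verts.ncard + (#B + 1) := by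
            grw [Set.ncard_union_le, Set.ncard_insert_le, Set.ncard_coe_finset]
        _ < 2 * (M.edgeSet.ncard + (#B + 1)) := by rw [hM.ncard_verts]; omega
        _ ≤ (G.neighborSet a).ncard := hdeg a (mem_insert_self a B)
    rw [SimpleGraph.mem_neighborSet] at hab
    simp only [Set.mem_union, Set.mem_insert_iff, not_or] at hb
    have hcard := ncard_edgeSet_sup_subgraphOfAdj hab hBM.1
    have hdisj : Disjoint (B : Set V) (M ⊔ G.subgraphOfAdj hab).verts := by
      rw [verts_sup, subgraphOfAdj_verts, Set.disjoint_union_right, Set.disjoint_insert_right,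
        Set.disjoint_singleton_right]
      exact ⟨hBM.2, haB, hb.2.2⟩
    obtain ⟨M', hM', hcard'⟩ := ih (hM.sup_subgraphOfAdj hab hBM.1 hb.1) hdisj fun v hv ↦ by
      rw [hcard]; have := hdeg v (mem_insert_of_mem hv); omega
    exact ⟨M', hM', by rw [hcard', hcard, card_insert_of_notMem haB]; ring⟩

end IsMatching

end SimpleGraph.Subgraph

open SimpleGraph Subgraph

section

variable {V : Type*} {H : SimpleGraph V}

lemma HasMatching.of_succ [Finite V] {k : ℕ} (h : HasMatching H (k + 1)) : HasMatching H k := by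
  obtain ⟨M, hM, hcard⟩ := h
  obtain ⟨e, he⟩ := Set.nonempty_of_ncard_ne_zero (by omega : M.edgeSet.ncard ≠ 0)
  induction e using Sym2.ind with
  | _ x y =>
    replace he : M.Adj x y := he
    have hxy : s(x, y) ∉ (M.deleteVerts {x, y}).edgeSet := fun h ↦
      (deleteVerts_adj.mp h).2.1 (Set.mem_insert x {y})
    refine ⟨_, hM.deleteVerts_pair he, ?_⟩
    rw [hM.edgeSet_eq_insert_deleteVerts_pair he, Set.ncard_insert_of_notMem hxy] at hcard
    omega

lemma HasMatching.of_le [Finite V] {j k : ℕ} (h : HasMatching H k) (hjk : j ≤ k) :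
    HasMatching H j := by
  induction k, hjk using Nat.le_induction with
  | base => exact h
  | succ k _ ih => exact ih h.of_succ

lemma hasMatching_of_le_ncard_add [Finite V] {n k : ℕ} (hk : 2 * k ≤ n) {M : H.Subgraph}
    (hM : M.IsMatching) {A : Set V} (hA : ∀ v ∈ A, n ≤ (H.neighborSet v).ncard)
    (hAM : Disjoint A M.verts) (hle : k ≤ A.ncard + M.edgeSet.ncard) : HasMatching H k := by
  rcases le_or_gt k M.edgeSet.ncard with hkM | hkM
  · exact HasMatching.of_le ⟨M, hM, rfl⟩ hkM
  obtain ⟨B, hBA, hB⟩ :=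
    Set.exists_subset_card_eq (show k - M.edgeSet.ncard ≤ A.ncard by omega)
  lift B to Finset V using B.toFinite
  rw [Set.ncard_coe_finset] at hB
  obtain ⟨M', hM', hcard⟩ := hM.exists_ncard_edgeSet_eq_add_card B (hAM.mono_left hBA)
    fun v hv ↦ by have := hA v (hBA hv); omega
  exact ⟨M', hM', by omega⟩

end

theorem highDegree_bound_general {V : Type*} [Fintype V] (H : SimpleGraph V) (n : ℕ)
    (hmatch : ¬ HasMatching H (n / 2))
    (A : Set V) (hA : A = {v | n ≤ (H.neighborSet v).ncard})
    (M : H.Subgraph) (hM : M.IsMatching) (hMA : M.verts ⊆ Aᶜ) :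
    (A.ncard : ℝ) ≤ (n : ℝ) / 2 - (M.verts.ncard : ℝ) / 2 := by
  have hlt : A.ncard + M.edgeSet.ncard < n / 2 := by
    by_contra! hle
    exact hmatch <| hasMatching_of_le_ncard_add (Nat.mul_div_le n 2) hM
      (fun v hv ↦ by rwa [hA] at hv) (Set.subset_compl_iff_disjoint_left.mp hMA) hle
  have hcount : 2 * A.ncard + M.verts.ncard ≤ n := by rw [hM.ncard_verts]; omega
  have hcount' : (2 * A.ncard + M.verts.ncard : ℝ) ≤ n := by exact_mod_cast hcount
  linarith

theorem highDegree_bound {V : Type*} [Fintype V] (H : SimpleGraph V) (n : ℕ)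
    (hn : Even n) (hn0 : 0 < n)
    (hmatch : ¬ HasMatching H (n / 2))
    (A : Set V) (hA : A = {v | n ≤ (H.neighborSet v).ncard})
    (M : H.Subgraph) (hM : M.IsMatching) (hMA : M.verts ⊆ Aᶜ)
    (hmax : ∀ M' : H.Subgraph, M'.IsMatching → M'.verts ⊆ Aᶜ → M ≤ M' → M' = M) :
    (A.ncard : ℝ) ≤ (n : ℝ) / 2 - (M.verts.ncard : ℝ) / 2 :=
  highDegree_bound_general H n hmatch A hA M hM hMA
end

section
/- Let H be a graph with maximum degree less than n that has no matching with more than v(M)/2 edges, where M is a maximal matching in H with vertex set of size v(M) < n. Then e(H) ≤ (v(M)/2)·(n + v(M)/4). -/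
/-!
Call a vertex of `V(M)` light if it has at most one neighbour outside `V(M)`. Since `M` is
maximum, `V(M)` is a vertex cover, and every edge of `M` has a light endpoint (two distinct
outside neighbours of `u` and `v` for `uv ∈ M` would give an augmenting path). Pairing each heavy
vertex with its partner shows `g ≤ b` for the numbers `g` of heavy and `b` of light vertices.
Counting the edges at heavy vertices by degree, the edges inside the light vertices by `b choose 2`
and the edges leaving them by `b` gives `e(H) ≤ g (n - 1) + (b choose 2) + b`, and this is at most
`(v(M)/2)(n + v(M)/4)` when `g ≤ b` and `b + g < n`.
-/

open Finset

namespace SimpleGraph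

variable {V : Type*} {H : SimpleGraph V}

section EdgeCount

variable [Fintype V] [DecidableEq V] [DecidableRel H.Adj]

/-- Every edge either meets `S`, or has both ends in `C`, or joins `C` to the outside of `S ∪ C`. -/
lemma card_edgeFinset_le_of_isVertexCover (S C : Finset V) (hcover : H.IsVertexCover ↑(S ∪ C)) :
    #H.edgeFinset ≤ ∑ v ∈ S, H.degree v + (#C).choose 2 +
      ∑ v ∈ C, #(H.neighborFinset v \ (S ∪ C)) := by
  set outEdges := C.biUnion fun v => (H.neighborFinset v \ (S ∪ C)).image (s(v, ·))
  have hsub : H.edgeFinset ⊆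
      S.biUnion (H.incidenceFinset ·) ∪ C.offDiag.image Sym2.mk.uncurry ∪ outEdges := by
    intro e he
    induction e using Sym2.ind with | h x y => ?_
    have hxy : H.Adj x y := by simpa using he
    have hinc : ∀ v ∈ S, v ∈ s(x, y) → s(x, y) ∈ S.biUnion (H.incidenceFinset ·) :=
      fun v hv hve => mem_biUnion.mpr ⟨v, hv, (H.mem_incidenceFinset v _).mpr ⟨hxy, hve⟩⟩
    have hout : ∀ a b, H.Adj a b → a ∈ C → b ∉ S ∪ C → s(a, b) ∈ outEdges :=
      fun a b hab ha hb => mem_biUnion.mpr ⟨a, ha, mem_image.mpr ⟨b, by simp [hab, hb], rfl⟩⟩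
    by_cases hS : x ∈ S ∨ y ∈ S
    · refine mem_union_left _ (mem_union_left _ ?_)
      rcases hS with hx | hy
      · exact hinc x hx (Sym2.mem_mk_left x y)
      · exact hinc y hy (Sym2.mem_mk_right x y)
    obtain ⟨hxS, hyS⟩ := not_or.mp hS
    have hcoverC : x ∈ C ∨ y ∈ C := by simpa [hxS, hyS] using hcover hxy
    by_cases hxC : x ∈ C <;> by_cases hyC : y ∈ C
    · exact mem_union_left _ (mem_union_right _ (mem_image.mpr
        ⟨(x, y), mem_offDiag.mpr ⟨hxC, hyC, hxy.ne⟩, rfl⟩))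
    · exact mem_union_right _ (hout x y hxy hxC (by simp [hyS, hyC]))
    · exact mem_union_right _ (Sym2.eq_swap ▸ hout y x hxy.symm hyC (by simp [hxS, hxC]))
    · exact absurd hcoverC (by simp [hxC, hyC])
  calc #H.edgeFinset
      ≤ #(S.biUnion (H.incidenceFinset ·)) + #(C.offDiag.image Sym2.mk.uncurry) + #outEdges :=
        (card_le_card hsub).trans <| (card_union_le _ _).trans <|
          Nat.add_le_add_right (card_union_le _ _) _
    _ ≤ ∑ v ∈ S, H.degree v + (#C).choose 2 + ∑ v ∈ C, #(H.neighborFinset v \ (S ∪ C)) := by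
        gcongr
        · exact card_biUnion_le.trans_eq
            (sum_congr rfl fun v _ => H.card_incidenceFinset_eq_degree v)
        · exact (Sym2.card_image_offDiag C).le
        · exact card_biUnion_le.trans (sum_le_sum fun v _ => card_image_le)

end EdgeCount

namespace Subgraph

def IsMaximumMatching (M : H.Subgraph) : Prop :=
  M.IsMatching ∧ ∀ M' : H.Subgraph, M'.IsMatching → M'.verts.ncard ≤ M.verts.ncard

variable {M : H.Subgraph}

lemma IsMatching.sup_of_disjoint_verts {M' : H.Subgraph} (hM : M.IsMatching)
    (hM' : M'.IsMatching) (h : Disjoint M.verts M'.verts) : (M ⊔ M').IsMatching :=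
  hM.sup hM' (by rwa [hM.support_eq_verts, hM'.support_eq_verts])

lemma IsMatching.deleteVerts_of_adj (hM : M.IsMatching) {u v : V} (huv : M.Adj u v) :
    (M.deleteVerts {u, v}).IsMatching := by
  rintro w ⟨hw, hwuv⟩
  obtain ⟨p, hwp, hp⟩ := hM hw
  refine ⟨p, ?_, fun z hz => hp z (deleteVerts_adj.mp hz).2.2.2.2⟩
  have hpu : p ≠ u := by
    rintro rfl; exact hwuv (by simp [hM.eq_of_adj_right hwp huv.symm])
  have hpv : p ≠ v := by
    rintro rfl; exact hwuv (by simp [hM.eq_of_adj_right hwp huv])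
  simp_all [M.edge_vert hwp.symm]

lemma IsMatching.card_filter_not_le_card_filter (hM : M.IsMatching) [Fintype M.verts]
    (p : V → Prop) [DecidablePred p] (hp : ∀ ⦃u v⦄, M.Adj u v → p u ∨ p v) :
    #{v ∈ M.verts.toFinset | ¬ p v} ≤ #{v ∈ M.verts.toFinset | p v} := by
  refine card_le_card_of_forall_subsingleton M.Adj (fun u hu => ?_) (fun v _ => ?_)
  · obtain ⟨huM, hpu⟩ := mem_filter.mp hu
    obtain ⟨v, huv, -⟩ := hM (Set.mem_toFinset.mp huM)
    exact ⟨v, mem_filter.mpr ⟨Set.mem_toFinset.mpr (M.edge_vert huv.symm),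
      (hp huv).resolve_left hpu⟩, huv⟩
  · exact fun a ha b hb => hM.eq_of_adj_right ha.2 hb.2

section Finite

variable [Finite V]

lemma IsMaximumMatching.isVertexCover (hM : M.IsMaximumMatching) : H.IsVertexCover M.verts := by
  intro x y hxy
  by_contra! hxyM
  have hdisj : Disjoint M.verts {x, y} := by simp [hxyM.1, hxyM.2]
  have hle := hM.2 _ (hM.1.sup_of_disjoint_verts (.subgraphOfAdj hxy) hdisj)
  rw [verts_sup, subgraphOfAdj_verts, Set.ncard_union_eq hdisj, Set.ncard_pair hxy.ne] at hle
  omega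

/-- Otherwise `x - u - v - y` would be an augmenting path. -/
lemma IsMaximumMatching.eq_of_adj_of_adj_of_notMem (hM : M.IsMaximumMatching) {u v x y : V}
    (huv : M.Adj u v) (hux : H.Adj u x) (hvy : H.Adj v y) (hx : x ∉ M.verts)
    (hy : y ∉ M.verts) : x = y := by
  by_contra hxy
  have hu := M.edge_vert huv
  have hv := M.edge_vert huv.symm
  have hM' : (M.deleteVerts {u, v} ⊔ H.subgraphOfAdj hux ⊔ H.subgraphOfAdj hvy).IsMatching := by
    refine ((hM.1.deleteVerts_of_adj huv).sup_of_disjoint_verts (.subgraphOfAdj hux) ?_)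
      |>.sup_of_disjoint_verts (.subgraphOfAdj hvy) ?_
    · simp only [deleteVerts_verts, subgraphOfAdj_verts, Set.disjoint_insert_right,
        Set.disjoint_singleton_right]
      simp [hx]
    · simp only [verts_sup, deleteVerts_verts, subgraphOfAdj_verts, Set.disjoint_insert_right,
        Set.disjoint_singleton_right]
      have := huv.ne
      grind
  have hverts : (M.deleteVerts {u, v} ⊔ H.subgraphOfAdj hux ⊔ H.subgraphOfAdj hvy).verts =
      M.verts ∪ {x, y} := by
    ext w
    simp only [verts_sup, deleteVerts_verts, subgraphOfAdj_verts, Set.mem_union, Set.mem_sdiff,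
      Set.mem_insert_iff, Set.mem_singleton_iff]
    grind
  have hdisj : Disjoint M.verts {x, y} := by simp [hx, hy]
  have hle := hM.2 _ hM'
  rw [hverts, Set.ncard_union_eq hdisj, Set.ncard_pair hxy] at hle
  omega

end Finite

lemma IsMaximumMatching.card_neighborFinset_sdiff_le_one_or [Fintype V] [DecidableEq V]
    [DecidableRel H.Adj] [Fintype M.verts] (hM : M.IsMaximumMatching) {u v : V}
    (huv : M.Adj u v) :
    #(H.neighborFinset u \ M.verts.toFinset) ≤ 1 ∨
      #(H.neighborFinset v \ M.verts.toFinset) ≤ 1 := by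
  by_contra! h
  obtain ⟨x, hx⟩ := card_pos.mp (Nat.zero_lt_of_lt h.1)
  obtain ⟨y, hy, hyx⟩ := exists_mem_ne h.2 x
  simp only [mem_sdiff, mem_neighborFinset, Set.mem_toFinset] at hx hy
  exact hyx (hM.eq_of_adj_of_adj_of_notMem huv hx.1 hy.1 hx.2 hy.2).symm

end Subgraph

end SimpleGraph

/-- The slack equals `g / 2 + (b - g) (n - b - g - 1) / 2 + (b - g) (b + 3 g) / 8`. -/
lemma cast_mul_sub_one_add_choose_two_add_le {b g n : ℕ} (hgb : g ≤ b) (hn : b + g < n) :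
    ((g * (n - 1) + b.choose 2 + b : ℕ) : ℝ) ≤ ((b + g : ℕ) : ℝ) / 2 * (n + (b + g : ℕ) / 4) := by
  have hgb' : (g : ℝ) ≤ b := by exact_mod_cast hgb
  have hn' : (b : ℝ) + g + 1 ≤ n := by exact_mod_cast hn
  push_cast [Nat.cast_sub (by omega : 1 ≤ n), Nat.cast_choose_two]
  linarith [mul_nonneg (sub_nonneg.mpr hgb') (sub_nonneg.mpr hn'),
    mul_nonneg (sub_nonneg.mpr hgb') (by positivity : (0 : ℝ) ≤ b + 3 * g),
    (Nat.cast_nonneg g : (0 : ℝ) ≤ g)]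

open SimpleGraph

theorem maxMatching_edge_bound {V : Type*} [Fintype V] (H : SimpleGraph V) (n : ℕ)
    (hdeg : ∀ v : V, (H.neighborSet v).ncard < n)
    (M : H.Subgraph) (hM : M.IsMatching)
    (hmax : ∀ M' : H.Subgraph, M'.IsMatching → M'.verts.ncard ≤ M.verts.ncard)
    (hsize : M.verts.ncard < n) :
    (H.edgeSet.ncard : ℝ) ≤ ((M.verts.ncard : ℝ) / 2) * ((n : ℝ) + (M.verts.ncard : ℝ) / 4) := by
  classical
  have hMax : M.IsMaximumMatching := ⟨hM, hmax⟩
  set W := M.verts.toFinset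
  set light := {v ∈ W | #(H.neighborFinset v \ W) ≤ 1}
  set heavy := {v ∈ W | ¬ #(H.neighborFinset v \ W) ≤ 1}
  have hW : heavy ∪ light = W := by rw [union_comm, filter_union_filter_not_eq]
  have hcard : M.verts.ncard = #light + #heavy := by
    rw [Set.ncard_eq_toFinset_card', card_filter_add_card_filter_not]
  have hheavy : #heavy ≤ #light :=
    hM.card_filter_not_le_card_filter _ fun _ _ huv => hMax.card_neighborFinset_sdiff_le_one_or huv
  have hedges := card_edgeFinset_le_of_isVertexCover heavy light
    (by simpa [hW, W] using hMax.isVertexCover)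
  have hdegHeavy : ∑ v ∈ heavy, H.degree v ≤ #heavy * (n - 1) := by
    refine sum_le_card_nsmul _ _ _ fun v _ => ?_
    have := hdeg v
    rw [← coe_neighborFinset, Set.ncard_coe_finset, card_neighborFinset_eq_degree] at this
    omega
  have hlight : ∑ v ∈ light, #(H.neighborFinset v \ (heavy ∪ light)) ≤ #light := by
    simpa [hW] using sum_le_card_nsmul light _ 1 fun v hv => (mem_filter.mp hv).2
  rw [← coe_edgeFinset, Set.ncard_coe_finset, hcard]
  calc (#H.edgeFinset : ℝ) ≤ ((#heavy * (n - 1) + (#light).choose 2 + #light : ℕ) : ℝ) := by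
        exact_mod_cast (by omega)
    _ ≤ _ := cast_mul_sub_one_add_choose_two_add_le hheavy (by omega)
end

section
/- For every integer k ≥ 2, there is an edge-colouring of the complete graph on 2(k−1)·(⌊n/2⌋ − 1) vertices with k colours containing no monochromatic path on n vertices; hence R_k(P_n) ≥ 2(k−1)(⌊n/2⌋ − 1) + 1. -/
/-!
Blow up a colouring of `K_{2(k-1)}` in which each of the first `k - 1` colours forms two
vertex-disjoint stars and the last colour is a perfect matching, colouring the blown-up sets of
size `s` with the last colour. A path in the last colour stays inside the blow-up of one matching
edge, so it has at most `2s` vertices. A path in another colour stays inside the blow-up of one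
star and each of its edges meets the blown-up centre, so it has at most `2s + 1` vertices. With
`s = ⌊n/2⌋ - 1` both bounds are less than `n`, and restricting the colouring to fewer vertices
gives the lower bound on `N`.
-/

open SimpleGraph

/-- `H` contains a path on `n` vertices as a subgraph. -/
def ContainsPath {V : Type*} (H : SimpleGraph V) (n : ℕ) : Prop :=
  ∃ (u v : V) (p : H.Walk u v), p.IsPath ∧ p.support.length = n

open Finset

theorem ContainsPath.map {V W : Type*} {G : SimpleGraph V} {H : SimpleGraph W} (f : G ↪g H)
    {n : ℕ} (h : ContainsPath G n) : ContainsPath H n := by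
  obtain ⟨u, v, p, hp, hlen⟩ := h
  exact ⟨f u, f v, p.map f.toHom, hp.map f.injective, by simpa using hlen⟩

theorem List.Nodup.length_le_of_isChain_mem_or_mem {α : Type*} [DecidableEq α] :
    ∀ {S : Finset α} {l : List α}, l.Nodup → l.IsChain (fun x y => x ∈ S ∨ y ∈ S) →
      l.length ≤ 2 * #S + 1
  | _, [], _, _ => by simp
  | _, [_], _, _ => by simp
  | S, a :: b :: t, hl, hchain => by
    obtain ⟨hab, ht⟩ := List.isChain_cons_cons.mp hchain
    obtain ⟨c, hcS, hc⟩ : ∃ c ∈ S, c = a ∨ c = b := by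
      rcases hab with h | h
      exacts [⟨a, h, .inl rfl⟩, ⟨b, h, .inr rfl⟩]
    have hct : c ∉ t := by
      rw [List.nodup_cons, List.nodup_cons, List.mem_cons] at hl
      rcases hc with rfl | rfl <;> tauto
    have ih := hl.of_cons.of_cons.length_le_of_isChain_mem_or_mem (S := S.erase c)
      (ht.tail.imp_of_mem_imp fun x y hx hy hxy => by
        simp only [mem_erase]
        exact hxy.imp (⟨ne_of_mem_of_not_mem hx hct, ·⟩)
          (⟨ne_of_mem_of_not_mem hy hct, ·⟩))
    have := card_erase_add_one hcS
    simp only [List.length_cons]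
    omega

namespace SimpleGraph

variable {V : Type*} {G : SimpleGraph V}

theorem Walk.apply_eq_of_mem_support {β : Type*} {π : V → β}
    (hπ : ∀ x y, G.Adj x y → π x = π y) {u v : V} (p : G.Walk u v) {x : V}
    (hx : x ∈ p.support) : π x = π u := by
  induction p with
  | nil => rw [support_nil, List.mem_singleton] at hx; rw [hx]
  | cons h p ih =>
    rw [support_cons, List.mem_cons] at hx
    rcases hx with rfl | hx
    · rfl
    · exact (ih hx).trans (hπ _ _ h).symm

variable [DecidableEq V] {u v : V} {p : G.Walk u v}

theorem Walk.IsPath.length_support_le_card (hp : p.IsPath) {T : Finset V}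
    (hT : ∀ x ∈ p.support, x ∈ T) : p.support.length ≤ #T := by
  rw [← List.toFinset_card_of_nodup hp.support_nodup]
  exact card_le_card fun x hx => hT x (List.mem_toFinset.mp hx)

theorem Walk.IsPath.length_support_le_of_mem_or_mem (hp : p.IsPath) (S : Finset V)
    (hS : ∀ x ∈ p.support, ∀ y ∈ p.support, G.Adj x y → x ∈ S ∨ y ∈ S) :
    p.support.length ≤ 2 * #S + 1 :=
  hp.support_nodup.length_le_of_isChain_mem_or_mem
    (p.isChain_adj_support.imp_of_mem_imp fun x y hx hy => hS x hx y hy)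

end SimpleGraph

section ColourGraph

variable {V W C : Type*}

def colourGraph (f : Sym2 V → C) (i : C) : SimpleGraph V :=
  SimpleGraph.fromRel fun u v => f s(u, v) = i

@[simp]
theorem colourGraph_adj {f : Sym2 V → C} {i : C} {u v : V} :
    (colourGraph f i).Adj u v ↔ u ≠ v ∧ f s(u, v) = i := by
  simp [colourGraph, Sym2.eq_swap]

theorem colourGraph_comp_sym2Map (f : Sym2 W → C) (e : V ↪ W) (i : C) :
    colourGraph (f ∘ Sym2.map e) i = (colourGraph f i).comap e := by
  ext
  simp

theorem ContainsPath.of_colourGraph_comp_sym2Map {f : Sym2 W → C} {e : V ↪ W} {i : C} {n : ℕ}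
    (h : ContainsPath (colourGraph (f ∘ Sym2.map e) i) n) : ContainsPath (colourGraph f i) n := by
  rw [colourGraph_comp_sym2Map] at h
  exact h.map (Embedding.comap e _)

end ColourGraph

section DoubleStar

variable {m : ℕ}

/-- Vertex `(e, j)` of `K_{2m}` lies on side `e` in class `j`. Colour `j.castSucc` consists of the
stars centred at `(0, j)` and `(1, j)`, and `Fin.last m` is the matching `(0, j)(1, j)`. -/
def doubleStarColour (x y : Fin 2 × Fin m) : Fin (m + 1) :=
  if x.2 = y.2 then Fin.last m
  else if x.1 = y.1 then (min x.2 y.2).castSucc else (max x.2 y.2).castSucc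

theorem doubleStarColour_comm (x y : Fin 2 × Fin m) :
    doubleStarColour x y = doubleStarColour y x := by
  simp only [doubleStarColour, eq_comm, min_comm, max_comm]

theorem snd_eq_of_doubleStarColour_eq_last {x y : Fin 2 × Fin m}
    (h : doubleStarColour x y = Fin.last m) : x.2 = y.2 := by
  unfold doubleStarColour at h
  split_ifs at h with hxy
  · exact hxy
  all_goals exact absurd h (Fin.castSucc_ne_last _)

/-- The side of the centre of the star of colour `j.castSucc` that contains `x`. -/
def starSide (j : Fin m) (x : Fin 2 × Fin m) : Fin 2 :=
  if j ≤ x.2 then x.1 else x.1.rev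

theorem starSide_of_snd_eq {j : Fin m} {x : Fin 2 × Fin m} (h : x.2 = j) :
    starSide j x = x.1 := by
  simp [starSide, h]

theorem starSide_eq_and_snd_eq_of_doubleStarColour_eq {j : Fin m} {x y : Fin 2 × Fin m}
    (h : doubleStarColour x y = j.castSucc) :
    starSide j x = starSide j y ∧ (x.2 = j ∨ y.2 = j) := by
  obtain ⟨a, b⟩ := x
  obtain ⟨c, d⟩ := y
  unfold doubleStarColour at h
  split_ifs at h with hbd hac
  · exact absurd h.symm (Fin.castSucc_ne_last _)
  all_goals
    rw [Fin.castSucc_inj] at h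
    unfold starSide
    split_ifs <;>
      simp only [Fin.ext_iff, Fin.le_def, Fin.val_rev, Fin.coe_min, Fin.coe_max] at * <;> omega

def blowUpColouring (m : ℕ) (α : Type*) : Sym2 ((Fin 2 × Fin m) × α) → Fin (m + 1) :=
  Sym2.lift ⟨doubleStarColour, doubleStarColour_comm⟩ ∘ Sym2.map Prod.fst

variable {α : Type*} {i : Fin (m + 1)}

theorem colourGraph_blowUpColouring_adj {x y : (Fin 2 × Fin m) × α} :
    (colourGraph (blowUpColouring m α) i).Adj x y ↔
      x ≠ y ∧ doubleStarColour x.1 y.1 = i := by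
  simp [blowUpColouring]

variable [Fintype α] [DecidableEq α] {u v : (Fin 2 × Fin m) × α}

namespace SimpleGraph.Walk.IsPath

theorem length_support_le_of_blowUpColouring_last
    {p : (colourGraph (blowUpColouring m α) (Fin.last m)).Walk u v} (hp : p.IsPath) :
    p.support.length ≤ 2 * Fintype.card α := by
  have hclass : ∀ x ∈ p.support, x ∈ (univ ×ˢ {u.1.2}) ×ˢ (univ : Finset α) := by
    intro x hx
    simp only [mem_product, mem_univ, mem_singleton, true_and, and_true]
    exact p.apply_eq_of_mem_support (π := fun x => x.1.2) (fun x y hxy =>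
      snd_eq_of_doubleStarColour_eq_last (colourGraph_blowUpColouring_adj.mp hxy).2) hx
  simpa using hp.length_support_le_card hclass

theorem length_support_le_of_blowUpColouring_castSucc {j : Fin m}
    {p : (colourGraph (blowUpColouring m α) j.castSucc).Walk u v} (hp : p.IsPath) :
    p.support.length ≤ 2 * Fintype.card α + 1 := by
  have hside : ∀ x ∈ p.support, starSide j x.1 = starSide j u.1 :=
    fun x hx => p.apply_eq_of_mem_support (π := fun x => starSide j x.1) (fun x y hxy =>
      (starSide_eq_and_snd_eq_of_doubleStarColour_eq
        (colourGraph_blowUpColouring_adj.mp hxy).2).1) hx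
  have hcentre : ∀ x ∈ p.support, x.1.2 = j →
      x ∈ {(starSide j u.1, j)} ×ˢ (univ : Finset α) := by
    intro x hx hxj
    rw [← hside x hx, starSide_of_snd_eq hxj]
    simp [← hxj]
  simpa using hp.length_support_le_of_mem_or_mem _ fun x hx y hy hxy =>
    ((starSide_eq_and_snd_eq_of_doubleStarColour_eq
      (colourGraph_blowUpColouring_adj.mp hxy).2).2).imp (hcentre x hx) (hcentre y hy)

theorem length_support_le_of_blowUpColouring
    {p : (colourGraph (blowUpColouring m α) i).Walk u v} (hp : p.IsPath) :
    p.support.length ≤ 2 * Fintype.card α + 1 := by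
  induction i using Fin.lastCases with
  | last => exact (hp.length_support_le_of_blowUpColouring_last).trans (Nat.le_succ _)
  | cast j => exact hp.length_support_le_of_blowUpColouring_castSucc

end SimpleGraph.Walk.IsPath

end DoubleStar

theorem ramsey_path_lower (k n : ℕ) (hk : 2 ≤ k) :
    (∃ f : Sym2 (Fin (2 * (k - 1) * (n / 2 - 1))) → Fin k,
      ∀ i : Fin k, ¬ ContainsPath (SimpleGraph.fromRel (fun u v => f s(u, v) = i)) n) ∧
    (∀ N : ℕ,
      (∀ f : Sym2 (Fin N) → Fin k,
        ∃ i : Fin k, ContainsPath (SimpleGraph.fromRel (fun u v => f s(u, v) = i)) n) →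
      2 * (k - 1) * (n / 2 - 1) + 1 ≤ N) := by
  obtain ⟨m, rfl⟩ : ∃ m, k = m + 1 := ⟨k - 1, by omega⟩
  rw [Nat.add_sub_cancel]
  set s := n / 2 - 1 with hs
  let e : Fin (2 * m * s) ↪ (Fin 2 × Fin m) × Fin s :=
    ((finProdFinEquiv.prodCongr (Equiv.refl _)).trans finProdFinEquiv).symm.toEmbedding
  let f := blowUpColouring m (Fin s) ∘ Sym2.map e
  have hf : ∀ i, ¬ ContainsPath (colourGraph f i) n := by
    intro i h
    obtain ⟨u, v, p, hp, hlen⟩ := h.of_colourGraph_comp_sym2Map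
    have hlen_le := hp.length_support_le_of_blowUpColouring
    rw [Fintype.card_fin] at hlen_le
    -- the vertex `u` shows `s ≥ 1`, hence `2 s + 1 < n`
    have hs_pos := u.2.pos
    omega
  refine ⟨⟨f, hf⟩, fun N hN => ?_⟩
  by_contra! hN'
  obtain ⟨i, hi⟩ := hN (f ∘ Sym2.map (Fin.castLEEmb (Nat.le_of_lt_succ hN')))
  exact hf i hi.of_colourGraph_comp_sym2Map
end

section
/- Let k ≥ 4, α = 1/4 − 1/(2k), N = (k − α)n, and suppose the components B_1,…,B_c of a graph on N vertices have total excess Σ_i max{v(B_i) − n, 0} = x·n with x < α ≤ 1/4 and each v(B_i) ≤ 5n/4. Then Σ_i C(v(B_i), 2) ≤ (k − 2α + 5α²)·n²/2. -/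
open SimpleGraph

open Finset in
/-- Sum of component sizes is the number of vertices. -/
lemma sum_card_supp_aux {N : ℕ} (B : SimpleGraph (Fin N)) [Fintype B.ConnectedComponent] :
    ∑ c : B.ConnectedComponent, c.supp.ncard = N := by
  classical
  have h := Finset.card_eq_sum_card_fiberwise
    (f := B.connectedComponentMk) (s := Finset.univ) (t := Finset.univ) (fun x _ => mem_univ _)
  rw [Finset.card_univ, Fintype.card_fin] at h
  refine Eq.trans (Finset.sum_congr rfl fun c _ => ?_) h.symm
  rw [Set.ncard_eq_toFinset_card']
  congr 1
  ext v
  simp [ConnectedComponent.mem_supp_iff]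

/-- Convexity-type lemma: for values in `[0, n]`, the sum of `t * (n - t)` is at least
`ρ * (n - ρ)` where `ρ` is the fractional part (relative to `n`) of the total sum. -/
lemma sum_t_mul_aux {ι : Type*} (n : ℝ) (hn : 0 < n) (S : Finset ι) (t : ι → ℝ)
    (h : ∀ i ∈ S, 0 ≤ t i ∧ t i ≤ n) :
    ∃ (m : ℕ) (ρ : ℝ), 0 ≤ ρ ∧ ρ < n ∧ (∑ i ∈ S, t i) = m * n + ρ ∧
      ρ * (n - ρ) ≤ ∑ i ∈ S, t i * (n - t i) := by
  induction S using Finset.cons_induction with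
  | empty => exact ⟨0, 0, le_refl _, hn, by simp, by simp⟩
  | cons a S ha ih =>
    obtain ⟨m, ρ, h0, h1, h2, h3⟩ := ih (fun i hi => h i (Finset.mem_cons_of_mem hi))
    obtain ⟨hta0, hta1⟩ := h a (Finset.mem_cons_self a S)
    rw [Finset.sum_cons, Finset.sum_cons]
    by_cases hcase : ρ + t a < n
    · refine ⟨m, ρ + t a, by linarith, hcase, by rw [h2]; ring, ?_⟩
      nlinarith [mul_nonneg h0 hta0]
    · refine ⟨m + 1, ρ + t a - n, by linarith, by linarith, by rw [h2]; push_cast; ring, ?_⟩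
      nlinarith [mul_nonneg (sub_nonneg.2 h1.le) (sub_nonneg.2 hta1)]

set_option maxHeartbeats 1600000 in
theorem edges_in_components_bound (k n N : ℕ) (hk : 4 ≤ k)
    (α x : ℝ) (hα : α = 1 / 4 - 1 / (2 * k)) (hN : (N : ℝ) = ((k : ℝ) - α) * n)
    (B : SimpleGraph (Fin N))
    (hx : (∑ᶠ c : B.ConnectedComponent, max ((c.supp.ncard : ℝ) - n) 0) = x * n)
    (hxα : x < α)
    (hcomp : ∀ c : B.ConnectedComponent, (c.supp.ncard : ℝ) ≤ 5 * n / 4) :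
    (∑ᶠ c : B.ConnectedComponent, (c.supp.ncard : ℝ) * ((c.supp.ncard : ℝ) - 1) / 2)
      ≤ ((k : ℝ) - 2 * α + 5 * α ^ 2) * (n : ℝ) ^ 2 / 2 := by
  classical
  have hk4 : (4 : ℝ) ≤ (k : ℝ) := by exact_mod_cast hk
  have hα1 : (1 : ℝ) / 8 ≤ α := by
    rw [hα]
    have h1 : (1 : ℝ) / (2 * k) ≤ 1 / 8 := by
      apply div_le_div_of_nonneg_left (by norm_num) (by norm_num) (by linarith)
    linarith
  have hα2 : α < 1 / 4 := by
    rw [hα]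
    have h1 : (0 : ℝ) < 1 / (2 * k) := by positivity
    linarith
  -- the size function
  set s : B.ConnectedComponent → ℝ := fun c => (c.supp.ncard : ℝ) with hs
  rcases Nat.eq_zero_or_pos n with hn0 | hnpos
  · -- degenerate case n = 0
    have hz : ∀ c : B.ConnectedComponent, s c * (s c - 1) / 2 = 0 := by
      intro c
      have h1 := hcomp c
      rw [hn0] at h1
      have h3 : c.supp.ncard = 0 := by simpa using h1
      have : s c = 0 := by simp [hs, h3]
      rw [this]; ring
    calc (∑ᶠ c : B.ConnectedComponent, s c * (s c - 1) / 2)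
        = ∑ᶠ c : B.ConnectedComponent, (0 : ℝ) := finsum_congr hz
      _ = 0 := finsum_zero
      _ ≤ ((k : ℝ) - 2 * α + 5 * α ^ 2) * (n : ℝ) ^ 2 / 2 := by
          rw [hn0]; norm_num
  have hn : (0 : ℝ) < n := by exact_mod_cast hnpos
  have hFin : Fintype B.ConnectedComponent := Fintype.ofFinite _
  -- convert finsums to finset sums
  rw [finsum_eq_sum_of_fintype] at hx ⊢
  -- basic sum facts
  have hsumN : ∑ c : B.ConnectedComponent, s c = N := by
    rw [hs]
    push_cast [← sum_card_supp_aux B]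
    rfl
  have hx0 : 0 ≤ x := by
    have h1 : (0 : ℝ) ≤ ∑ c : B.ConnectedComponent, max (s c - n) 0 :=
      Finset.sum_nonneg fun c _ => le_max_right _ _
    rw [hx] at h1
    nlinarith [h1]
  -- split sizes into truncated part and excess
  set e : B.ConnectedComponent → ℝ := fun c => max (s c - n) 0 with he
  set t : B.ConnectedComponent → ℝ := fun c => min (s c) n with ht
  have hte : ∀ c, s c = t c + e c := by
    intro c
    rcases le_total (s c) (n : ℝ) with h | h
    · rw [ht, he]
      simp only [min_eq_left h, max_eq_right (by linarith : s c - n ≤ 0)]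
      ring
    · rw [ht, he]
      simp only [min_eq_right h, max_eq_left (by linarith : (0:ℝ) ≤ s c - n)]
      ring
  have ht0 : ∀ c, 0 ≤ t c := fun c => le_min (Nat.cast_nonneg _) hn.le
  have ht1 : ∀ c, t c ≤ n := fun c => min_le_right _ _
  have he0 : ∀ c, 0 ≤ e c := fun c => le_max_right _ _
  set r : ℝ := (1 - α - x) * n with hr
  have hr0 : 0 ≤ r := by
    have : (0:ℝ) ≤ 1 - α - x := by linarith
    positivity
  have hr1 : r < n := by
    rw [hr]; nlinarith
  -- total truncated mass
  have hT : ∑ c : B.ConnectedComponent, t c = ((k : ℝ) - 1) * n + r := by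
    have h1 : ∑ c : B.ConnectedComponent, t c
        = (∑ c : B.ConnectedComponent, s c) - ∑ c : B.ConnectedComponent, e c := by
      rw [← Finset.sum_sub_distrib]
      exact Finset.sum_congr rfl fun c _ => by rw [hte c]; ring
    rw [h1, hsumN, hx, hN, hr]; ring
  -- the key convexity bound
  obtain ⟨m, ρ, hρ0, hρ1, hρ2, hρ3⟩ :=
    sum_t_mul_aux (n : ℝ) hn Finset.univ t (fun c _ => ⟨ht0 c, ht1 c⟩)
  rw [hT] at hρ2
  -- identify ρ with r
  have hρr : ρ = r := by
    have hm1 : (m : ℝ) < k := by nlinarith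
    have hm2 : (k : ℝ) < (m : ℝ) + 2 := by nlinarith
    have hm1' : m < k := by exact_mod_cast hm1
    have hm2' : k < m + 2 := by exact_mod_cast hm2
    have hmk : m = k - 1 := by omega
    have hmk' : (m : ℝ) = (k : ℝ) - 1 := by
      rw [hmk]
      push_cast [Nat.cast_sub (by omega : 1 ≤ k)]
      ring
    rw [hmk'] at hρ2
    linarith
  rw [hρr] at hρ3
  -- bound the sum of squares
  have hsq : ∑ c : B.ConnectedComponent, (s c) ^ 2
      ≤ ((k : ℝ) - 1) * n ^ 2 + r ^ 2 + 2 * x * n ^ 2 + x ^ 2 * n ^ 2 := by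
    have h1 : ∀ c, (s c) ^ 2 = (t c * n - t c * (n - t c)) + 2 * (t c * e c) + (e c) ^ 2 := by
      intro c; rw [hte c]; ring
    rw [Finset.sum_congr rfl fun c _ => h1 c]
    rw [Finset.sum_add_distrib, Finset.sum_add_distrib, Finset.sum_sub_distrib,
      ← Finset.sum_mul, ← Finset.mul_sum]
    have h2 : ∑ c : B.ConnectedComponent, e c ^ 2
        ≤ (∑ c : B.ConnectedComponent, e c) ^ 2 :=
      Finset.sum_sq_le_sq_sum_of_nonneg (fun c _ => he0 c)
    have h3 : ∑ c : B.ConnectedComponent, t c * e c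
        ≤ ∑ c : B.ConnectedComponent, (n : ℝ) * e c :=
      Finset.sum_le_sum fun c _ => mul_le_mul_of_nonneg_right (ht1 c) (he0 c)
    rw [← Finset.mul_sum] at h3
    rw [hx] at h2 h3
    have hTn : (∑ c : B.ConnectedComponent, t c) * (n : ℝ)
        = ((k : ℝ) - 1) * n ^ 2 + r * n := by rw [hT]; ring
    have hρ3' : r * n - r ^ 2 ≤ ∑ c : B.ConnectedComponent, t c * ((n : ℝ) - t c) := by
      have : r * ((n : ℝ) - r) = r * n - r ^ 2 := by ring
      linarith [hρ3]
    have h2' : ∑ c : B.ConnectedComponent, e c ^ 2 ≤ x ^ 2 * n ^ 2 := by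
      have : (x * (n : ℝ)) ^ 2 = x ^ 2 * n ^ 2 := by ring
      linarith [h2]
    have h3' : ∑ c : B.ConnectedComponent, t c * e c ≤ x * n ^ 2 := by
      have : (n : ℝ) * (x * n) = x * n ^ 2 := by ring
      linarith [h3]
    linarith [hTn, hρ3', h2', h3']
  -- conclusion
  have hfinal : ∑ c : B.ConnectedComponent, s c * (s c - 1) / 2
      = ((∑ c : B.ConnectedComponent, (s c) ^ 2) - (N : ℝ)) / 2 := by
    rw [← hsumN, ← Finset.sum_sub_distrib, ← Finset.sum_div]
    congr 1
    exact Finset.sum_congr rfl fun c _ => by ring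
  rw [hfinal]
  have hN0 : (0 : ℝ) ≤ (N : ℝ) := Nat.cast_nonneg _
  have hkey : x ^ 2 + (α + x) ^ 2 ≤ 5 * α ^ 2 := by
    nlinarith [mul_nonneg (by linarith : (0:ℝ) ≤ 2 * α + x) (by linarith : (0:ℝ) ≤ α - x)]
  have h5 : ((k : ℝ) - 1) * n ^ 2 + r ^ 2 + 2 * x * n ^ 2 + x ^ 2 * n ^ 2
      ≤ ((k : ℝ) - 2 * α + 5 * α ^ 2) * n ^ 2 := by
    have h6 : (0 : ℝ) ≤ (5 * α ^ 2 - x ^ 2 - (α + x) ^ 2) * n ^ 2 :=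
      mul_nonneg (by linarith [hkey]) (sq_nonneg _)
    have h7 : r ^ 2 = (1 - α - x) ^ 2 * n ^ 2 := by rw [hr]; ring
    nlinarith [h6, h7]
  linarith [hsq, h5, hN0]
end
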